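/- arXiv:1812.06477 — 4 statements merged into one kernel-verified Lean document; each statement's English description precedes it below -/
import Mathlib

section
/- Let G be a finite simple graph without isolated vertices on vertex set V. Then the Z-Grundy domination number and the zero forcing number of G satisfy γ^Z_gr(G) + Z(G) = |V|. -/
/-- One step of the zero forcing colour-change rule: some black vertex `v ∈ S`
whose unique white neighbour is `w` forces `w`, giving `T = insert w S`. -/
def zfStep {V : Type*} [DecidableEq V] (G : SimpleGraph V) (S T : Finset V) : Prop :=
  ∃ v ∈ S, ∃ w, w ∉ S ∧ G.Adj v w ∧ (∀ u, G.Adj v u → u ∉ S → u = w) ∧ T = insert w S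

/-- `S` is a zero forcing set: iterating the colour-change rule from `S` reaches all of `V`. -/
def IsZeroForcingSet {V : Type*} [DecidableEq V] [Fintype V] (G : SimpleGraph V)
    (S : Finset V) : Prop :=
  Relation.ReflTransGen (zfStep G) S Finset.univ

/-- The zero forcing number: minimum size of a zero forcing set. -/
noncomputable def zeroForcingNumber {V : Type*} [DecidableEq V] [Fintype V]
    (G : SimpleGraph V) : ℕ :=
  sInf {k | ∃ S : Finset V, IsZeroForcingSet G S ∧ S.card = k}

/-- `(v 0, …, v (k-1))` is a Z-sequence: each `v i` has a neighbour outside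
`⋃_{j<i} N[v j]`. -/
def IsZSeq {V : Type*} (G : SimpleGraph V) {k : ℕ} (v : Fin k → V) : Prop :=
  ∀ i : Fin k, ∃ x, G.Adj (v i) x ∧ ∀ j : Fin k, j < i → x ≠ v j ∧ ¬ G.Adj (v j) x

/-- `w` is a witness sequence for the Z-sequence `v`: each `w i` is a neighbour of `v i`
lying outside `⋃_{j<i} N[v j]`. -/
def IsWitnessSeq {V : Type*} (G : SimpleGraph V) {k : ℕ} (v w : Fin k → V) : Prop :=
  ∀ i : Fin k, G.Adj (v i) (w i) ∧ ∀ j : Fin k, j < i → w i ≠ v j ∧ ¬ G.Adj (v j) (w i)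

/-- The Z-Grundy domination number: maximum length of a Z-sequence. -/
noncomputable def zGrundyNumber {V : Type*} [Fintype V] (G : SimpleGraph V) : ℕ :=
  sSup {k | ∃ v : Fin k → V, IsZSeq G v}

/-!
Read a Z-sequence backwards as a forcing chain. If `w i` is a neighbour of `v i` outside the
closed neighbourhoods of the earlier `v j`, then, starting from the complement of
`{w 0, …, w (k-1)}`, the vertex `v 0` is black and `w 0` is its only white neighbour; after
`v 0` forces `w 0` the remaining sequence is again a Z-sequence, so `V \ {w i}` is a zero
forcing set and `Z(G) ≤ |V| - γ^Z_gr(G)`. Conversely, the forcing vertices and the forced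
vertices of a forcing chain from `S`, in order, form a Z-sequence with its witnesses, of
length `|V| - |S|`.
-/

open Finset

section

variable {V : Type*} {G : SimpleGraph V}

namespace IsWitnessSeq

variable {k : ℕ}

theorem isZSeq {v w : Fin k → V} (hw : IsWitnessSeq G v w) : IsZSeq G v :=
  fun i => ⟨w i, hw i⟩

theorem injective {v w : Fin k → V} (hw : IsWitnessSeq G v w) : Function.Injective w := by
  intro i j hij
  by_contra hne
  rcases lt_or_gt_of_ne hne with hlt | hlt
  · exact ((hw j).2 i hlt).2 (hij ▸ (hw i).1)
  · exact ((hw i).2 j hlt).2 (hij ▸ (hw j).1)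

theorem card_le [Fintype V] {v w : Fin k → V} (hw : IsWitnessSeq G v w) :
    k ≤ Fintype.card V := by
  simpa using Fintype.card_le_of_injective w hw.injective

theorem tail {v w : Fin (k + 1) → V} (hw : IsWitnessSeq G v w) :
    IsWitnessSeq G (Fin.tail v) (Fin.tail w) :=
  fun i => ⟨(hw i.succ).1, fun j hj => (hw i.succ).2 j.succ (Fin.succ_lt_succ_iff.mpr hj)⟩

theorem cons {v w : Fin k → V} (hw : IsWitnessSeq G v w) {v₀ w₀ : V} (hadj : G.Adj v₀ w₀)
    (hfresh : ∀ i, w i ≠ v₀ ∧ ¬ G.Adj v₀ (w i)) :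
    IsWitnessSeq G (Fin.cons v₀ v : Fin (k + 1) → V) (Fin.cons w₀ w) := by
  intro i
  rcases Fin.eq_zero_or_eq_succ i with rfl | ⟨i, rfl⟩
  · exact ⟨hadj, fun j hj => absurd hj (Fin.not_lt_zero j)⟩
  refine ⟨by simpa using (hw i).1, fun j hj => ?_⟩
  rcases Fin.eq_zero_or_eq_succ j with rfl | ⟨j, rfl⟩
  · simpa using hfresh i
  · simpa using (hw i).2 j (Fin.succ_lt_succ_iff.mp hj)

variable [DecidableEq V] [Fintype V]

theorem zfStep_compl_image {v w : Fin (k + 1) → V} (hw : IsWitnessSeq G v w) :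
    zfStep G (univ.image w)ᶜ (univ.image (Fin.tail w))ᶜ := by
  have hlater : ∀ j ≠ 0, w j ≠ v 0 ∧ ¬ G.Adj (v 0) (w j) :=
    fun j hj => (hw j).2 0 (Fin.pos_iff_ne_zero.mpr hj)
  have himage : univ.image w = insert (w 0) (univ.image (Fin.tail w)) := by
    ext x
    simp [Fin.exists_fin_succ, Fin.tail, eq_comm]
  have hw₀ : w 0 ∉ univ.image (Fin.tail w) := by
    simp only [mem_image, mem_univ, true_and, not_exists]
    intro i (hi : w i.succ = w 0)
    exact (hlater i.succ (Fin.succ_ne_zero i)).2 (hi ▸ (hw 0).1)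
  refine ⟨v 0, ?_, w 0, by simp, (hw 0).1, ?_, ?_⟩
  · simp only [mem_compl, mem_image, mem_univ, true_and, not_exists]
    intro j hj
    by_cases hj₀ : j = 0
    · subst hj₀
      exact G.ne_of_adj (hw 0).1 hj.symm
    · exact (hlater j hj₀).1 hj
  · simp only [mem_compl, mem_image, mem_univ, true_and, not_exists, not_forall, not_not]
    rintro u hu ⟨j, rfl⟩
    by_cases hj₀ : j = 0
    · rw [hj₀]
    · exact absurd hu (hlater j hj₀).2
  · rw [himage, compl_insert, insert_erase (mem_compl.mpr hw₀)]

theorem isZeroForcingSet_compl_image :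
    ∀ {k : ℕ} {v w : Fin k → V}, IsWitnessSeq G v w → IsZeroForcingSet G (univ.image w)ᶜ
  | 0, _, _, _ => by simp [IsZeroForcingSet, Relation.ReflTransGen.refl]
  | _ + 1, _, _, hw => .head hw.zfStep_compl_image (isZeroForcingSet_compl_image hw.tail)

end IsWitnessSeq

theorem exists_isWitnessSeq_of_reflTransGen_zfStep [DecidableEq V] {S T : Finset V}
    (hST : Relation.ReflTransGen (zfStep G) S T) :
    ∃ (k : ℕ) (v w : Fin k → V), IsWitnessSeq G v w ∧ (∀ i, w i ∉ S) ∧ S.card + k = T.card := by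
  induction hST using Relation.ReflTransGen.head_induction_on with
  | refl => exact ⟨0, Fin.elim0, Fin.elim0, fun i => i.elim0, fun i => i.elim0, rfl⟩
  | @head A _ hstep _ ih =>
    obtain ⟨v₀, hv₀, w₀, hw₀, hadj, huniq, rfl⟩ := hstep
    obtain ⟨k, v, w, hw, hwS, hcard⟩ := ih
    have hwA : ∀ i, w i ∉ A := fun i hi => hwS i (mem_insert_of_mem hi)
    refine ⟨k + 1, Fin.cons v₀ v, Fin.cons w₀ w, hw.cons hadj fun i => ⟨?_, ?_⟩, ?_, ?_⟩
    · exact fun hi => hwA i (hi ▸ hv₀)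
    · exact fun hi => hwS i (huniq _ hi (hwA i) ▸ mem_insert_self _ _)
    · intro i
      rcases Fin.eq_zero_or_eq_succ i with rfl | ⟨i, rfl⟩
      · simpa using hw₀
      · simpa using hwA i
    · rw [card_insert_of_notMem hw₀] at hcard
      omega

variable [Fintype V] (G)

theorem bddAbove_zSeq_lengths : BddAbove {k | ∃ v : Fin k → V, IsZSeq G v} := by
  refine ⟨Fintype.card V, fun k ⟨v, hv⟩ => ?_⟩
  choose w hw using hv
  exact IsWitnessSeq.card_le (w := w) hw

theorem exists_isWitnessSeq_zGrundyNumber :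
    ∃ v w : Fin (zGrundyNumber G) → V, IsWitnessSeq G v w := by
  obtain ⟨v, hv⟩ : zGrundyNumber G ∈ {k | ∃ v : Fin k → V, IsZSeq G v} :=
    Nat.sSup_mem ⟨0, Fin.elim0, fun i => i.elim0⟩ (bddAbove_zSeq_lengths G)
  choose w hw using hv
  exact ⟨v, w, hw⟩

variable {G}

theorem le_zGrundyNumber {k : ℕ} {v : Fin k → V} (hv : IsZSeq G v) : k ≤ zGrundyNumber G :=
  le_csSup (bddAbove_zSeq_lengths G) ⟨v, hv⟩

variable [DecidableEq V]

theorem zeroForcingNumber_le {S : Finset V} (hS : IsZeroForcingSet G S) :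
    zeroForcingNumber G ≤ S.card :=
  Nat.sInf_le ⟨S, hS, rfl⟩

variable (G)

theorem exists_isZeroForcingSet_card_eq :
    ∃ S : Finset V, IsZeroForcingSet G S ∧ S.card = zeroForcingNumber G :=
  Nat.sInf_mem (s := {k | ∃ S : Finset V, IsZeroForcingSet G S ∧ S.card = k})
    ⟨_, univ, Relation.ReflTransGen.refl, rfl⟩

end

theorem zGrundy_add_zeroForcing_general {V : Type*} [Fintype V] [DecidableEq V]
    (G : SimpleGraph V) :
    zGrundyNumber G + zeroForcingNumber G = Fintype.card V := by
  obtain ⟨v, w, hw⟩ := exists_isWitnessSeq_zGrundyNumber G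
  have hZ := zeroForcingNumber_le hw.isZeroForcingSet_compl_image
  rw [card_compl, card_image_of_injective _ hw.injective, card_univ, Fintype.card_fin] at hZ
  obtain ⟨S, hS, hScard⟩ := exists_isZeroForcingSet_card_eq G
  obtain ⟨k, v', w', hw', -, hk⟩ := exists_isWitnessSeq_of_reflTransGen_zfStep hS
  have hγ := le_zGrundyNumber hw'.isZSeq
  have hγn := hw.card_le
  rw [card_univ] at hk
  omega

/-- If `G` is a finite simple graph without isolated vertices on vertex set `V`, then
`γ^Z_gr(G) + Z(G) = |V|`. -/
theorem zGrundy_add_zeroForcing {V : Type*} [Fintype V] [DecidableEq V]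
    (G : SimpleGraph V) (h : ∀ v : V, ∃ u : V, G.Adj v u) :
    zGrundyNumber G + zeroForcingNumber G = Fintype.card V :=
  zGrundy_add_zeroForcing_general G
end

section
/- Let G be a finite simple graph on vertex set V, let S = (v_1,…,v_k) be a Z-sequence of G, and let W = (w_1,…,w_k) be a witness sequence for S. Then V \ {w_1,…,w_k} is a zero forcing set of G. -/
/-!
Order the black sets by the stage of the Z-sequence: at stage `i` every vertex is black except
the witnesses `w j` with `j ≥ i`. The vertex `v i` is then black (it is no later witness), and
among its neighbours only `w i` is white, because `w j` for `j > i` lies outside `N[v i]`.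
So `v i` forces `w i`, and after `k` stages every vertex is black.
-/

open Finset

def witnessesFrom {V : Type*} [DecidableEq V] {k : ℕ} (w : Fin k → V) (n : ℕ) : Finset V :=
  (univ.filter fun j : Fin k => n ≤ (j : ℕ)).image w

section witnessesFrom

variable {V : Type*} [DecidableEq V] {k : ℕ} (w : Fin k → V)

theorem mem_witnessesFrom {n : ℕ} {x : V} :
    x ∈ witnessesFrom w n ↔ ∃ j : Fin k, n ≤ (j : ℕ) ∧ w j = x := by
  simp [witnessesFrom]

theorem witnessesFrom_zero : witnessesFrom w 0 = univ.image w := by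
  simp [witnessesFrom]

theorem witnessesFrom_eq_empty {n : ℕ} (hn : k ≤ n) : witnessesFrom w n = ∅ := by
  simp only [witnessesFrom, image_eq_empty, filter_eq_empty_iff]
  omega

theorem witnessesFrom_eq_insert (i : Fin k) :
    witnessesFrom w i = insert (w i) (witnessesFrom w (i + 1)) := by
  ext x
  simp only [mem_insert, mem_witnessesFrom]
  constructor
  · rintro ⟨j, hij, rfl⟩
    rcases hij.eq_or_lt with hij | hij
    · exact .inl (congrArg w (Fin.ext hij.symm))
    · exact .inr ⟨j, hij, rfl⟩
  · rintro (rfl | ⟨j, hij, rfl⟩)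
    · exact ⟨i, le_rfl, rfl⟩
    · exact ⟨j, by omega, rfl⟩

end witnessesFrom

namespace IsWitnessSeq

variable {V : Type*} {G : SimpleGraph V} {k : ℕ} {v w : Fin k → V} {i j : Fin k}

theorem adj_iff (hw : IsWitnessSeq G v w) (hij : i ≤ j) : G.Adj (v i) (w j) ↔ i = j := by
  refine ⟨fun hadj => ?_, fun h => h ▸ (hw i).1⟩
  by_contra hne
  exact ((hw j).2 i (lt_of_le_of_ne hij hne)).2 hadj

theorem ne (hw : IsWitnessSeq G v w) (hij : i ≤ j) : v i ≠ w j := by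
  rcases hij.eq_or_lt with rfl | hij
  · exact (hw i).1.ne
  · exact ((hw j).2 i hij).1.symm

variable [DecidableEq V]

theorem notMem_witnessesFrom_succ (hw : IsWitnessSeq G v w) (i : Fin k) :
    w i ∉ witnessesFrom w (i + 1) := by
  rw [mem_witnessesFrom]
  rintro ⟨j, hij, hji⟩
  have : i = j := (hw.adj_iff (Fin.le_iff_val_le_val.2 (by omega))).1 (hji ▸ (hw i).1)
  omega

theorem zfStep_compl_witnessesFrom [Fintype V] (hw : IsWitnessSeq G v w) (i : Fin k) :
    zfStep G (univ \ witnessesFrom w i) (univ \ witnessesFrom w (i + 1)) := by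
  have hblack : ∀ {x}, x ∈ univ \ witnessesFrom w i ↔ ∀ j : Fin k, i ≤ j → w j ≠ x := by
    simp [mem_witnessesFrom]
  refine ⟨v i, hblack.2 fun j hij => (hw.ne hij).symm, w i, ?_, (hw i).1, ?_, ?_⟩
  · exact fun h => hblack.1 h i le_rfl rfl
  · intro u hadj hu
    obtain ⟨j, hij, rfl⟩ : ∃ j : Fin k, i ≤ j ∧ w j = u := by simpa using hblack.not.1 hu
    rw [(hw.adj_iff hij).1 hadj]
  · rw [witnessesFrom_eq_insert w i,
      sdiff_insert_insert_of_mem_of_notMem (mem_univ _) (hw.notMem_witnessesFrom_succ i)]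

end IsWitnessSeq

theorem compl_witness_isZeroForcingSet_general {V : Type*} [Fintype V] [DecidableEq V]
    (G : SimpleGraph V) {k : ℕ} (v w : Fin k → V)
    (hw : IsWitnessSeq G v w) :
    IsZeroForcingSet G (Finset.univ \ Finset.image w Finset.univ) := by
  let black : ℕ → Finset V := fun n => univ \ witnessesFrom w n
  have hchain : Relation.ReflTransGen (fun m n => zfStep G (black m) (black n)) 0 k :=
    reflTransGen_of_succ_of_le _ (fun i hi => hw.zfStep_compl_witnessesFrom ⟨i, (Set.mem_Ico.1 hi).2⟩)
      (Nat.zero_le k)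
  have hreach : Relation.ReflTransGen (zfStep G) (black 0) (black k) :=
    hchain.lift black fun _ _ h => h
  simpa [IsZeroForcingSet, black, witnessesFrom_zero, witnessesFrom_eq_empty] using hreach

/-- If `S = (v 0, …, v (k-1))` is a Z-sequence of `G` with witness sequence
`W = (w 0, …, w (k-1))`, then `V \ {w 0, …, w (k-1)}` is a zero forcing set of `G`. -/
theorem compl_witness_isZeroForcingSet {V : Type*} [Fintype V] [DecidableEq V]
    (G : SimpleGraph V) {k : ℕ} (v w : Fin k → V)
    (hv : IsZSeq G v) (hw : IsWitnessSeq G v w) :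
    IsZeroForcingSet G (Finset.univ \ Finset.image w Finset.univ) :=
  compl_witness_isZeroForcingSet_general G v w hw
end

section
/- (Expander Mixing Lemma) Let G = (V,E) be an (n,d,λ)-graph and let U, W ⊆ V. Then |d|U||W|/n − e(U,W)| ≤ λ·√(|U||W|(1 − |U|/n)(1 − |W|/n)), where e(U,W) = |{(u,w) ∈ U × W : {u,w} ∈ E}| (edges with both endpoints in U ∩ W are counted twice). -/
/-- `G` is an `(n,d,λ)`-graph: `d`-regular on its (finite) vertex set, and all
eigenvalues of its adjacency matrix other than one (the top eigenvalue `d`) have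
absolute value at most `lam ≥ 0`. -/
def IsNDLGraph {V : Type*} [Fintype V] [DecidableEq V] (G : SimpleGraph V)
    [DecidableRel G.Adj] (d : ℕ) (lam : ℝ) : Prop :=
  0 ≤ lam ∧ G.IsRegularOfDegree d ∧
    ∃ (hA : (G.adjMatrix ℝ).IsHermitian) (i₀ : V),
      ∀ i : V, i ≠ i₀ → |hA.eigenvalues i| ≤ lam

/-- `ePairs G U W` is the number of ordered pairs `(u,w) ∈ U × W` with `{u,w}` an edge
(edges with both endpoints in `U ∩ W` are counted twice). -/
def ePairs {V : Type*} [DecidableEq V] (G : SimpleGraph V) [DecidableRel G.Adj]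
    (U W : Finset V) : ℕ :=
  ((U ×ˢ W).filter fun p => G.Adj p.1 p.2).card

/-!
Centre the indicator vectors: `x = 𝟙_U - (|U|/n) 𝟙` and `y = 𝟙_W - (|W|/n) 𝟙`. Then
`⟪x, A y⟫ = e(U,W) - d|U||W|/n`, `‖x‖² = |U|(1 - |U|/n)`, `‖y‖² = |W|(1 - |W|/n)`, and
`x ⊥ 𝟙`. Expanding `⟪x, A y⟫` in an orthonormal eigenbasis of `A` and applying Cauchy–Schwarz
gives `|⟪x, A y⟫| ≤ λ ‖x‖ ‖y‖`, as long as every eigenvector not orthogonal to `x` has eigenvalue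
at most `λ` in absolute value. The only eigenvalue that could exceed `λ` is the top one `d`, whose
eigenvector is `𝟙`, orthogonal to `x`.
-/

open Finset Matrix WithLp
open scoped RealInnerProductSpace

namespace OrthonormalBasis

variable {ι E : Type*} [Fintype ι] [NormedAddCommGroup E] [InnerProductSpace ℝ E]
  (b : OrthonormalBasis ι ℝ E)

theorem inner_map_eq_sum {T : E →ₗ[ℝ] E} {μ : ι → ℝ} (hT : ∀ i, T (b i) = μ i • b i)
    (x y : E) : ⟪x, T y⟫ = ∑ i, μ i * (⟪b i, x⟫ * ⟪b i, y⟫) := by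
  conv_lhs => rw [← b.sum_repr' y]
  simp only [map_sum, map_smul, hT, inner_sum, real_inner_smul_right]
  exact sum_congr rfl fun i _ => by rw [real_inner_comm x]; ring

theorem abs_inner_map_le {T : E →ₗ[ℝ] E} {μ : ι → ℝ} (hT : ∀ i, T (b i) = μ i • b i)
    {lam : ℝ} (hlam : 0 ≤ lam) {x : E} (hx : ∀ i, ⟪b i, x⟫ ≠ 0 → |μ i| ≤ lam) (y : E) :
    |⟪x, T y⟫| ≤ lam * (‖x‖ * ‖y‖) := by
  rw [b.inner_map_eq_sum hT]
  calc |∑ i, μ i * (⟪b i, x⟫ * ⟪b i, y⟫)|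
      ≤ ∑ i, lam * (|⟪b i, x⟫| * |⟪b i, y⟫|) := by
        refine (abs_sum_le_sum_abs _ _).trans (sum_le_sum fun i _ => ?_)
        rw [abs_mul, abs_mul]
        by_cases hi : ⟪b i, x⟫ = 0
        · simp [hi]
        · gcongr
          exact hx i hi
    _ = lam * ∑ i, |⟪b i, x⟫| * |⟪b i, y⟫| := (mul_sum _ _ _).symm
    _ ≤ lam * (‖x‖ * ‖y‖) := by
        gcongr
        refine (Real.sum_mul_le_sqrt_mul_sqrt _ _ _).trans_eq ?_
        simp only [sq_abs, sum_sq_inner_right, Real.sqrt_sq (norm_nonneg _)]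

theorem inner_eq_zero_of_inner_eq_zero_of_forall_ne {i₀ : ι} {v x : E} (hv : v ≠ 0)
    (hbv : ∀ i, i ≠ i₀ → ⟪b i, v⟫ = 0) (hxv : ⟪x, v⟫ = 0) : ⟪b i₀, x⟫ = 0 := by
  have hsum : ∀ z, ⟪z, v⟫ = ⟪z, b i₀⟫ * ⟪b i₀, v⟫ := fun z => by
    rw [← b.sum_inner_mul_inner, sum_eq_single i₀ (fun i _ hi => by rw [hbv i hi, mul_zero])
      (fun h => absurd (mem_univ i₀) h)]
  have hv₀ : ⟪b i₀, v⟫ ≠ 0 := fun h => hv (inner_self_eq_zero.1 (by rw [hsum, h, mul_zero]))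
  rw [real_inner_comm]
  exact (mul_eq_zero.1 ((hsum x).symm.trans hxv)).resolve_right hv₀

end OrthonormalBasis

theorem LinearMap.IsSymmetric.inner_eq_zero_of_eigenvalue_ne {E : Type*} [NormedAddCommGroup E]
    [InnerProductSpace ℝ E] {T : E →ₗ[ℝ] E} (hT : T.IsSymmetric) {u v : E} {a c : ℝ}
    (hu : T u = a • u) (hv : T v = c • v) (hac : a ≠ c) : ⟪u, v⟫ = 0 := by
  have h : a * ⟪u, v⟫ = c * ⟪u, v⟫ := by
    rw [← real_inner_smul_left, ← hu, hT, hv, real_inner_smul_right]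
  exact (mul_eq_zero.1 (by rw [sub_mul, h, sub_self] : (a - c) * ⟪u, v⟫ = 0)).resolve_left
    (sub_ne_zero.2 hac)

namespace Matrix.IsHermitian

variable {n : Type*} [Fintype n] [DecidableEq n] {A : Matrix n n ℝ} (hA : A.IsHermitian)

theorem toEuclideanLin_eigenvectorBasis (i : n) :
    toEuclideanLin A (hA.eigenvectorBasis i) = hA.eigenvalues i • hA.eigenvectorBasis i := by
  rw [toLpLin_apply, hA.mulVec_eigenvectorBasis]
  rfl

theorem hasEigenvalue_eigenvalues (i : n) :
    Module.End.HasEigenvalue (toLin' A) (hA.eigenvalues i) :=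
  Module.End.hasEigenvalue_of_hasEigenvector
    ⟨Module.End.mem_eigenspace_iff.2 (by simpa using hA.mulVec_eigenvectorBasis i),
      fun h => hA.eigenvectorBasis.orthonormal.ne_zero i (by simpa using h)⟩

end Matrix.IsHermitian

section Indicator

variable {V : Type*} [Fintype V] [DecidableEq V]

def indicatorVec (s : Finset V) : EuclideanSpace ℝ V :=
  toLp 2 fun v => if v ∈ s then 1 else 0

theorem inner_indicatorVec (s t : Finset V) :
    ⟪indicatorVec s, indicatorVec t⟫ = #(s ∩ t) := by
  simp [indicatorVec, EuclideanSpace.inner_toLp_toLp, dotProduct]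

noncomputable def centeredIndicator (s : Finset V) : EuclideanSpace ℝ V :=
  indicatorVec s - (#s / Fintype.card V : ℝ) • indicatorVec univ

theorem inner_centeredIndicator_indicatorVec_univ (s : Finset V) :
    ⟪centeredIndicator s, indicatorVec univ⟫ = 0 := by
  have hs : (#s : ℝ) / Fintype.card V * Fintype.card V = #s :=
    div_mul_cancel_of_imp fun h => by
      simpa using Nat.le_zero.1 ((card_le_univ s).trans (Nat.cast_eq_zero.1 h).le)
  rw [centeredIndicator, inner_sub_left, real_inner_smul_left, inner_indicatorVec,
    inner_indicatorVec, inter_univ, inter_self, card_univ, hs, sub_self]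

theorem norm_centeredIndicator_sq (s : Finset V) :
    ‖centeredIndicator s‖ ^ 2 = #s * (1 - #s / Fintype.card V) := by
  rw [← real_inner_self_eq_norm_sq]
  nth_rw 2 [centeredIndicator]
  rw [inner_sub_right, real_inner_smul_right, inner_centeredIndicator_indicatorVec_univ,
    mul_zero, sub_zero, centeredIndicator, inner_sub_left, real_inner_smul_left,
    inner_indicatorVec, inner_indicatorVec, inter_self, univ_inter]
  ring

end Indicator

namespace SimpleGraph

variable {V : Type*} [Fintype V] [DecidableEq V] {G : SimpleGraph V} [DecidableRel G.Adj]
  {d : ℕ}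

theorem IsRegularOfDegree.abs_le_of_hasEigenvalue (hd : G.IsRegularOfDegree d) {μ : ℝ}
    (hμ : Module.End.HasEigenvalue (toLin' (G.adjMatrix ℝ)) μ) : |μ| ≤ d := by
  obtain ⟨k, hk⟩ := eigenvalue_mem_ball hμ
  have hrow : ∑ j, G.adjMatrix ℝ k j = d := by
    simpa only [mulVec, dotProduct, Function.const_apply, mul_one] using
      adjMatrix_mulVec_const_apply_of_regular (α := ℝ) (a := 1) hd (v := k)
  rw [Metric.mem_closedBall, Real.dist_eq, adjMatrix_apply, if_neg G.irrefl, sub_zero] at hk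
  refine hk.trans_eq ?_
  rw [sum_erase _ (by simp), ← hrow]
  exact sum_congr rfl fun j _ =>
    Real.norm_of_nonneg (by rw [adjMatrix_apply]; split_ifs <;> norm_num)

theorem IsRegularOfDegree.toEuclideanLin_adjMatrix_indicatorVec_univ
    (hd : G.IsRegularOfDegree d) :
    toEuclideanLin (G.adjMatrix ℝ) (indicatorVec univ) = (d : ℝ) • indicatorVec univ := by
  ext v
  simp [indicatorVec, hd v]

theorem inner_indicatorVec_toEuclideanLin_adjMatrix (U W : Finset V) :
    ⟪indicatorVec U, toEuclideanLin (G.adjMatrix ℝ) (indicatorVec W)⟫ = ePairs G U W := by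
  rw [ePairs, card_filter, sum_product]
  push_cast
  simp only [indicatorVec, toLpLin_toLp, toLin'_apply, EuclideanSpace.inner_toLp_toLp,
    star_trivial, dotProduct, mulVec, mul_ite, mul_one, mul_zero, sum_ite_mem, univ_inter,
    adjMatrix_apply]

theorem IsRegularOfDegree.inner_centeredIndicator_toEuclideanLin_adjMatrix
    (hd : G.IsRegularOfDegree d) (U W : Finset V) :
    ⟪centeredIndicator U, toEuclideanLin (G.adjMatrix ℝ) (centeredIndicator W)⟫ =
      ePairs G U W - d * #U * #W / Fintype.card V := by
  have hT := isSymmetric_toEuclideanLin_iff.2 (G.isHermitian_adjMatrix ℝ)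
  nth_rw 2 [centeredIndicator]
  rw [map_sub, map_smul, hd.toEuclideanLin_adjMatrix_indicatorVec_univ, inner_sub_right,
    real_inner_smul_right, real_inner_smul_right, inner_centeredIndicator_indicatorVec_univ,
    centeredIndicator, inner_sub_left, real_inner_smul_left,
    inner_indicatorVec_toEuclideanLin_adjMatrix, ← hT,
    hd.toEuclideanLin_adjMatrix_indicatorVec_univ, real_inner_smul_left, inner_indicatorVec,
    univ_inter]
  ring

end SimpleGraph

/-- The exceptional index `i₀` of an `(n,d,λ)`-graph need not carry the eigenvalue `d`. If
`d ≤ λ`, Gershgorin bounds `|μ i₀| ≤ d` anyway; otherwise `d` is an eigenvalue (of `𝟙`) different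
from every `μ i`, `i ≠ i₀`, so `𝟙` is a multiple of `b i₀` and `x ⊥ 𝟙` forces `x ⊥ b i₀`. -/
theorem IsNDLGraph.abs_eigenvalue_le_of_inner_ne_zero {V : Type*} [Fintype V] [DecidableEq V]
    {G : SimpleGraph V} [DecidableRel G.Adj] {d : ℕ} {lam : ℝ} (hG : IsNDLGraph G d lam)
    {x : EuclideanSpace ℝ V} (hx : ⟪x, indicatorVec univ⟫ = 0) {i : V}
    (hi : ⟪(G.isHermitian_adjMatrix ℝ).eigenvectorBasis i, x⟫ ≠ 0) :
    |(G.isHermitian_adjMatrix ℝ).eigenvalues i| ≤ lam := by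
  obtain ⟨-, hreg, hA', i₀, hb⟩ := hG
  set hA := G.isHermitian_adjMatrix ℝ
  rcases ne_or_eq i i₀ with hi₀ | rfl
  · exact hb i hi₀
  by_cases hdl : (d : ℝ) ≤ lam
  · exact (hreg.abs_le_of_hasEigenvalue (hA.hasEigenvalue_eigenvalues i)).trans hdl
  refine absurd ?_ hi
  have hT := isSymmetric_toEuclideanLin_iff.2 hA
  refine hA.eigenvectorBasis.inner_eq_zero_of_inner_eq_zero_of_forall_ne ?_ (fun j hj => ?_) hx
  · intro h
    simpa [indicatorVec] using congrArg (fun z : EuclideanSpace ℝ V => z i) h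
  · refine hT.inner_eq_zero_of_eigenvalue_ne (hA.toEuclideanLin_eigenvectorBasis j)
      hreg.toEuclideanLin_adjMatrix_indicatorVec_univ fun h => ?_
    have := hb j hj
    rw [h, abs_of_nonneg (Nat.cast_nonneg d)] at this
    exact hdl this

/-- Expander Mixing Lemma: for an `(n,d,λ)`-graph `G` and vertex subsets `U, W`,
`|d|U||W|/n − e(U,W)| ≤ λ √(|U||W|(1 − |U|/n)(1 − |W|/n))`. -/
theorem expander_mixing_lemma {V : Type*} [Fintype V] [DecidableEq V]
    (G : SimpleGraph V) [DecidableRel G.Adj] (d : ℕ) (lam : ℝ)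
    (hG : IsNDLGraph G d lam) (U W : Finset V) :
    |(d : ℝ) * U.card * W.card / Fintype.card V - (ePairs G U W : ℝ)| ≤
      lam * Real.sqrt ((U.card : ℝ) * W.card *
        (1 - (U.card : ℝ) / Fintype.card V) * (1 - (W.card : ℝ) / Fintype.card V)) := by
  set hA := G.isHermitian_adjMatrix ℝ
  have hbound := hA.eigenvectorBasis.abs_inner_map_le hA.toEuclideanLin_eigenvectorBasis hG.1
    (fun i hi => hG.abs_eigenvalue_le_of_inner_ne_zero
      (inner_centeredIndicator_indicatorVec_univ U) hi) (centeredIndicator W)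
  rw [hG.2.1.inner_centeredIndicator_toEuclideanLin_adjMatrix, abs_sub_comm] at hbound
  have hsq : (#U : ℝ) * #W * (1 - #U / Fintype.card V) * (1 - #W / Fintype.card V) =
      (‖centeredIndicator U‖ * ‖centeredIndicator W‖) ^ 2 := by
    rw [mul_pow, norm_centeredIndicator_sq, norm_centeredIndicator_sq]
    ring
  rwa [hsq, Real.sqrt_sq (by positivity)]
end

section
/- Let G be a finite simple graph, let S = (v_1,…,v_{2q}) be a Z-sequence of G of length 2q, and let W = (w_1,…,w_{2q}) be a witness sequence for S. Then the sets A = {v_1,…,v_q} and B = {w_{q+1},…,w_{2q}} satisfy |A| = |B| = q, A ∩ B = ∅, and there is no edge of G with one endpoint in A and the other in B; that is, A and B form a q-bipartite hole. -/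
/-- `G` has a `q`-bipartite hole: two disjoint sets of `q` vertices each with no edges
of `G` between them. -/
def HasBipartiteHole {V : Type*} (G : SimpleGraph V) (q : ℕ) : Prop :=
  ∃ A B : Finset V, A.card = q ∧ B.card = q ∧ Disjoint A B ∧
    ∀ a ∈ A, ∀ b ∈ B, ¬ G.Adj a b

/-! The witness `w j` avoids `N[v i]` for every `i < j`. For `i < q ≤ j` this separates the two
halves; for `v i = v j` or `w i = w j` it contradicts `v j ~ w j` or `v i ~ w i`, so both sequences
are injective and each half has `q` elements. -/

open Finset

namespace IsWitnessSeq

variable {V : Type*} {G : SimpleGraph V} {k : ℕ} {v w : Fin k → V}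

theorem ne_of_lt (hw : IsWitnessSeq G v w) {i j : Fin k} (hij : i < j) : w j ≠ v i :=
  ((hw j).2 i hij).1

theorem not_adj_of_lt (hw : IsWitnessSeq G v w) {i j : Fin k} (hij : i < j) :
    ¬ G.Adj (v i) (w j) :=
  ((hw j).2 i hij).2

theorem injective_left (hw : IsWitnessSeq G v w) : Function.Injective v :=
  .of_lt_imp_ne fun _ j hij h => hw.not_adj_of_lt hij (h ▸ (hw j).1)

theorem injective_right (hw : IsWitnessSeq G v w) : Function.Injective w :=
  .of_lt_imp_ne fun i _ hij h => hw.not_adj_of_lt hij (h ▸ (hw i).1)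

end IsWitnessSeq

theorem Fin.card_filter_le_val {n m : ℕ} : #{i : Fin n | m ≤ (i : ℕ)} = n - m := by
  have h := card_filter_add_card_filter_not (s := univ) fun i : Fin n => (i : ℕ) < m
  simp only [not_lt, Fin.card_filter_val_lt, card_univ, Fintype.card_fin] at h
  omega

theorem zSeq_yields_bipartite_hole_general {V : Type*} [DecidableEq V] (G : SimpleGraph V)
    (q : ℕ) (v w : Fin (2 * q) → V) (hw : IsWitnessSeq G v w)
    (A B : Finset V)
    (hA : A = (Finset.univ.filter fun i : Fin (2 * q) => (i : ℕ) < q).image v)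
    (hB : B = (Finset.univ.filter fun i : Fin (2 * q) => q ≤ (i : ℕ)).image w) :
    A.card = q ∧ B.card = q ∧ Disjoint A B ∧ ∀ a ∈ A, ∀ b ∈ B, ¬ G.Adj a b := by
  subst hA hB
  refine ⟨?_, ?_, ?_, ?_⟩
  · rw [card_image_of_injective _ hw.injective_left, Fin.card_filter_val_lt]
    omega
  · rw [card_image_of_injective _ hw.injective_right, Fin.card_filter_le_val]
    omega
  · simp only [disjoint_left, mem_image, mem_filter, mem_univ, true_and]
    rintro _ ⟨i, hi, rfl⟩ ⟨j, hj, hji⟩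
    exact hw.ne_of_lt (Fin.lt_def.2 (hi.trans_le hj)) hji
  · simp only [mem_image, mem_filter, mem_univ, true_and]
    rintro _ ⟨i, hi, rfl⟩ _ ⟨j, hj, rfl⟩
    exact hw.not_adj_of_lt (Fin.lt_def.2 (hi.trans_le hj))

/-- If `(v 0, …, v (2q-1))` is a Z-sequence of `G` with witness sequence
`(w 0, …, w (2q-1))`, then `A = {v 0, …, v (q-1)}` and `B = {w q, …, w (2q-1)}` form a
`q`-bipartite hole: `|A| = |B| = q`, `A ∩ B = ∅`, and there is no edge between them. -/
theorem zSeq_yields_bipartite_hole {V : Type*} [DecidableEq V] (G : SimpleGraph V)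
    (q : ℕ) (v w : Fin (2 * q) → V) (hv : IsZSeq G v) (hw : IsWitnessSeq G v w)
    (A B : Finset V)
    (hA : A = (Finset.univ.filter fun i : Fin (2 * q) => (i : ℕ) < q).image v)
    (hB : B = (Finset.univ.filter fun i : Fin (2 * q) => q ≤ (i : ℕ)).image w) :
    A.card = q ∧ B.card = q ∧ Disjoint A B ∧ ∀ a ∈ A, ∀ b ∈ B, ¬ G.Adj a b :=
  zSeq_yields_bipartite_hole_general G q v w hw A B hA hB
end
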